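/- arXiv:1905.12174 — 6 statements merged into one kernel-verified Lean document; each statement's English description precedes it below -/
import Mathlib

section
/- Let A0, A1, A2, A3 be points of F³ whose difference vectors A1−A0, A2−A0, A3−A0 are linearly independent. Then the six B-midplanes of the tetrahedron A0A1A2A3 have a common point; that is, there exists a point C in F³ such that (A_j − A_i)·_B (C − (A_i + A_j)/2) = 0 for all 0 ≤ i < j ≤ 3. -/
open Matrix

/-- The `B`-scalar product of two vectors in `F³`: `u ·_B v = u B vᵀ`. -/
def bdot {F : Type*} [Field F] (B : Matrix (Fin 3) (Fin 3) F) (u v : Fin 3 → F) : F :=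
  u ⬝ᵥ B.mulVec v

section aux

variable {F : Type*} [Field F] (B : Matrix (Fin 3) (Fin 3) F)

lemma bdot_sub_left (u u' v : Fin 3 → F) :
    bdot B (u - u') v = bdot B u v - bdot B u' v := by
  simp [bdot, sub_dotProduct]

lemma bdot_sub_right (u v v' : Fin 3 → F) :
    bdot B u (v - v') = bdot B u v - bdot B u v' := by
  simp [bdot, Matrix.mulVec_sub, dotProduct_sub]

lemma bdot_add_right (u v v' : Fin 3 → F) :
    bdot B u (v + v') = bdot B u v + bdot B u v' := by
  simp [bdot, Matrix.mulVec_add, dotProduct_add]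

lemma bdot_smul_right (c : F) (u v : Fin 3 → F) :
    bdot B u (c • v) = c * bdot B u v := by
  simp [bdot, Matrix.mulVec_smul, dotProduct_smul, smul_eq_mul]

lemma bdot_symm (hB : B.IsSymm) (u v : Fin 3 → F) : bdot B u v = bdot B v u := by
  unfold bdot
  rw [Matrix.dotProduct_mulVec, ← Matrix.mulVec_transpose, hB.eq, dotProduct_comm]

lemma bdot_key (hB : B.IsSymm) (x y c : Fin 3 → F) :
    bdot B (y - x) (c - (2 : F)⁻¹ • (x + y)) =
      (bdot B y c - (2 : F)⁻¹ * bdot B y y) -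
        (bdot B x c - (2 : F)⁻¹ * bdot B x x) := by
  rw [bdot_sub_left, bdot_sub_right, bdot_sub_right, bdot_smul_right, bdot_smul_right,
    bdot_add_right, bdot_add_right, bdot_symm B hB y x]
  ring

end aux

/-- **Tetrahedron B-circumcentre theorem.**
If the difference vectors `A1 − A0`, `A2 − A0`, `A3 − A0` are linearly independent,
then the six B-midplanes of the tetrahedron `A0A1A2A3` have a common point `C`:
`(A j − A i) ·_B (C − (A i + A j)/2) = 0` for all `i < j`. -/
theorem tetrahedron_circumcentre {F : Type*} [Field F]
    (h2 : (2 : F) ≠ 0) (h3 : (3 : F) ≠ 0)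
    (B : Matrix (Fin 3) (Fin 3) F) (hB : B.IsSymm) (hBdet : IsUnit B.det)
    (A : Fin 4 → (Fin 3 → F))
    (hind : LinearIndependent F ![A 1 - A 0, A 2 - A 0, A 3 - A 0]) :
    ∃ C : Fin 3 → F, ∀ i j : Fin 4, i < j →
      bdot B (A j - A i) (C - (2 : F)⁻¹ • (A i + A j)) = 0 := by
  set M : Matrix (Fin 3) (Fin 3) F := Matrix.of ![A 1 - A 0, A 2 - A 0, A 3 - A 0] with hM
  have hMrow : ∀ k : Fin 3, M k = A k.succ - A 0 := by
    intro k
    fin_cases k <;> rfl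
  have hMunit : IsUnit M := by
    rw [← Matrix.linearIndependent_rows_iff_isUnit]
    exact hind
  have hNunit : IsUnit (M * B).det := by
    rw [Matrix.det_mul]
    exact ((Matrix.isUnit_iff_isUnit_det M).mp hMunit).mul hBdet
  set b : Fin 3 → F := fun k =>
    (2 : F)⁻¹ * (bdot B (A k.succ) (A k.succ) - bdot B (A 0) (A 0)) with hb
  refine ⟨(M * B)⁻¹.mulVec b, ?_⟩
  set C : Fin 3 → F := (M * B)⁻¹.mulVec b with hCdef
  have hsolve : (M * B).mulVec C = b := by
    rw [hCdef, Matrix.mulVec_mulVec, Matrix.mul_nonsing_inv _ hNunit, Matrix.one_mulVec]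
  have hC : ∀ k : Fin 3, bdot B (A k.succ - A 0) C = b k := by
    intro k
    have : bdot B (A k.succ - A 0) C = (M * B).mulVec C k := by
      rw [← Matrix.mulVec_mulVec]
      rw [show (M.mulVec (B.mulVec C)) k = M k ⬝ᵥ B.mulVec C from rfl, hMrow k]
      rfl
    rw [this, hsolve]
  have h : ∀ k : Fin 4, bdot B (A k) C =
      bdot B (A 0) C + (2 : F)⁻¹ * (bdot B (A k) (A k) - bdot B (A 0) (A 0)) := by
    intro k
    refine Fin.cases ?_ (fun j => ?_) k
    · ring
    · have := hC j
      rw [bdot_sub_left] at this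
      rw [hb] at this
      linear_combination this
  intro i j hij
  rw [bdot_key B hB, h i, h j]
  ring
end

section
/- Suppose Δ ≠ 0, and let C = ((α1·a1 + β3·a2 + β2·a3)/(2Δ), (β3·a1 + α2·a2 + β1·a3)/(2Δ), (β2·a1 + β1·a2 + α3·a3)/(2Δ)) be the B-circumcentre of the Standard tetrahedron X0X1X2X3. Then the B-circumquadrance R = Q(C, X0) satisfies R = A(a1·r1, a2·r2, a3·r3)/(16Δ). -/
open Matrix

/-- The `B`-quadrance of two points: `Q(X,Y) = (Y−X)·_B(Y−X)`. -/
def quadrance {F : Type*} [Field F] (B : Matrix (Fin 3) (Fin 3) F) (X Y : Fin 3 → F) : F :=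
  bdot B (Y - X) (Y - X)

/-- Archimedes's function `A(a,b,c) = (a+b+c)² − 2(a²+b²+c²)`. -/
def archi {F : Type*} [Field F] (a b c : F) : F :=
  (a + b + c) ^ 2 - 2 * (a ^ 2 + b ^ 2 + c ^ 2)

set_option  maxHeartbeats 4000000 in
lemma auxkey {F : Type*} [Field F] (a b c p q r d : F) (h2 : (2:F) ≠ 0) (hd : d ≠ 0)
    (hdet : d = a * b * c - a * r * r - p * p * c + p * r * q + q * p * r - q * b * q) :
    (0 -
            ((b * c - r * r) * a + (-(p * c) + q * r) * b +
                (p * r - q * b) * c) /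
              (2 * d)) *
          (a *
                (0 -
                  ((b * c - r * r) * a + (-(p * c) + q * r) * b +
                      (p * r - q * b) * c) /
                    (2 * d)) +
              p *
                (0 -
                  ((-(p * c) + q * r) * a + (a * c - q * q) * b +
                      (-(a * r) + q * p) * c) /
                    (2 * d)) +
            q *
              (0 -
                ((p * r - q * b) * a + (-(a * r) + q * p) * b +
                    (a * b - p * p) * c) /
                  (2 * d))) +
        (0 -
            ((-(p * c) + q * r) * a + (a * c - q * q) * b +
                (-(a * r) + q * p) * c) /
              (2 * d)) *
          (p *
                (0 -
                  ((b * c - r * r) * a + (-(p * c) + q * r) * b +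
                      (p * r - q * b) * c) /
                    (2 * d)) +
              b *
                (0 -
                  ((-(p * c) + q * r) * a + (a * c - q * q) * b +
                      (-(a * r) + q * p) * c) /
                    (2 * d)) +
            r *
              (0 -
                ((p * r - q * b) * a + (-(a * r) + q * p) * b +
                    (a * b - p * p) * c) /
                  (2 * d))) +
      (0 -
          ((p * r - q * b) * a + (-(a * r) + q * p) * b +
              (a * b - p * p) * c) /
            (2 * d)) *
        (q *
              (0 -
                ((b * c - r * r) * a + (-(p * c) + q * r) * b +
                    (p * r - q * b) * c) /
                  (2 * d)) +
            r *
              (0 -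
                ((-(p * c) + q * r) * a + (a * c - q * q) * b +
                    (-(a * r) + q * p) * c) /
                  (2 * d)) +
          c *
            (0 -
              ((p * r - q * b) * a + (-(a * r) + q * p) * b +
                  (a * b - p * p) * c) /
                (2 * d))) =
    archi (a * (b + c - 2 * r)) (b * (a + c - 2 * q))
        (c * (a + b - 2 * p)) /
      (16 * d) := by
  have h16 : (16:F) ≠ 0 := by
    have h : (16:F) = 2^4 := by norm_num
    rw [h]; exact pow_ne_zero _ h2
  unfold archi
  field_simp
  subst hdet
  ring

set_option maxHeartbeats 1000000 in
/-- The B-circumquadrance `R = Q(C, X0)` of the Standard tetrahedron, where `C` is its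
B-circumcentre, satisfies `R = A(a1·r1, a2·r2, a3·r3)/(16Δ)`, where `a1, a2, a3` are the
diagonal entries of `B`, `r1 = a2 + a3 − 2b1`, `r2 = a1 + a3 − 2b2`, `r3 = a1 + a2 − 2b3`,
and `Δ = det B`. -/
theorem circumquadrance_standard_tetrahedron {F : Type*} [Field F]
    (h2 : (2 : F) ≠ 0) (h3 : (3 : F) ≠ 0)
    (B : Matrix (Fin 3) (Fin 3) F) (hB : B.IsSymm) (hΔ : B.det ≠ 0)
    (C : Fin 3 → F)
    (hC : C = ![(B.adjugate 0 0 * B 0 0 + B.adjugate 0 1 * B 1 1 + B.adjugate 0 2 * B 2 2) / (2 * B.det),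
                (B.adjugate 0 1 * B 0 0 + B.adjugate 1 1 * B 1 1 + B.adjugate 1 2 * B 2 2) / (2 * B.det),
                (B.adjugate 0 2 * B 0 0 + B.adjugate 1 2 * B 1 1 + B.adjugate 2 2 * B 2 2) / (2 * B.det)])
    (R : F) (hR : R = quadrance B C ![0, 0, 0]) :
    R = archi (B 0 0 * (B 1 1 + B 2 2 - 2 * B 1 2))
              (B 1 1 * (B 0 0 + B 2 2 - 2 * B 0 2))
              (B 2 2 * (B 0 0 + B 1 1 - 2 * B 0 1)) / (16 * B.det) := by
  have e10 : B 1 0 = B 0 1 := by rw [← hB.apply]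
  have e20 : B 2 0 = B 0 2 := by rw [← hB.apply]
  have e21 : B 2 1 = B 1 2 := by rw [← hB.apply]
  have hdet : B.det = B 0 0 * B 1 1 * B 2 2 - B 0 0 * B 1 2 * B 1 2 -
      B 0 1 * B 0 1 * B 2 2 + B 0 1 * B 1 2 * B 0 2 + B 0 2 * B 0 1 * B 1 2 -
      B 0 2 * B 1 1 * B 0 2 := by rw [det_fin_three, e10, e20, e21]
  subst hR hC
  simp only [quadrance, bdot, mulVec, dotProduct, Fin.sum_univ_three,
    adjugate_fin_three, cons_val', cons_val_zero, cons_val_one, head_cons,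
    head_fin_const, empty_val', cons_val_fin_one, cons_val_two, tail_cons,
    Pi.sub_apply, of_apply]
  rw [e10, e20, e21]
  exact auxkey (B 0 0) (B 1 1) (B 2 2) (B 0 1) (B 0 2) (B 1 2) B.det h2 hΔ hdet
end

section
/- Let A0, A1, A2, A3 be points of F³ such that the four B-quadreas 𝒜012, 𝒜013, 𝒜023, 𝒜123 are all nonzero. Then (𝒜012·𝒜013·𝒜023·𝒜123)² · A(E01·E23, E02·E13, E03·E12) = 256·𝒱⁴ · A(Q01·Q23, Q02·Q13, Q03·Q12). -/
open Matrix

/-- The `B`-quadrea of the triangle `XYZ`: `A(Q(X,Y), Q(X,Z), Q(Y,Z))`. -/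
def quadrea {F : Type*} [Field F] (B : Matrix (Fin 3) (Fin 3) F) (X Y Z : Fin 3 → F) : F :=
  archi (quadrance B X Y) (quadrance B X Z) (quadrance B Y Z)

/-- The `B`-quadrume of the tetrahedron `A0A1A2A3`. -/
def quadrume {F : Type*} [Field F] (B : Matrix (Fin 3) (Fin 3) F)
    (A0 A1 A2 A3 : Fin 3 → F) : F :=
  (1 / 2) * Matrix.det
    !![2 * quadrance B A0 A1,
       quadrance B A0 A1 + quadrance B A0 A2 - quadrance B A1 A2,
       quadrance B A0 A1 + quadrance B A0 A3 - quadrance B A1 A3;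
       quadrance B A0 A1 + quadrance B A0 A2 - quadrance B A1 A2,
       2 * quadrance B A0 A2,
       quadrance B A0 A2 + quadrance B A0 A3 - quadrance B A2 A3;
       quadrance B A0 A1 + quadrance B A0 A3 - quadrance B A1 A3,
       quadrance B A0 A2 + quadrance B A0 A3 - quadrance B A2 A3,
       2 * quadrance B A0 A3]

/-- `(𝒜012·𝒜013·𝒜023·𝒜123)² · A(E01·E23, E02·E13, E03·E12)
  = 256·𝒱⁴ · A(Q01·Q23, Q02·Q13, Q03·Q12)`. -/
theorem quadrea_sq_archi_dihedral {F : Type*} [Field F]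
    (h2 : (2 : F) ≠ 0) (h3 : (3 : F) ≠ 0)
    (B : Matrix (Fin 3) (Fin 3) F) (hB : B.IsSymm) (hBdet : IsUnit B.det)
    (A0 A1 A2 A3 : Fin 3 → F)
    (h012 : quadrea B A0 A1 A2 ≠ 0) (h013 : quadrea B A0 A1 A3 ≠ 0)
    (h023 : quadrea B A0 A2 A3 ≠ 0) (h123 : quadrea B A1 A2 A3 ≠ 0)
    (V : F) (hV : V = quadrume B A0 A1 A2 A3)
    (E01 E02 E03 E12 E13 E23 : F)
    (hE01 : E01 = 4 * quadrance B A0 A1 * V / (quadrea B A0 A1 A2 * quadrea B A0 A1 A3))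
    (hE02 : E02 = 4 * quadrance B A0 A2 * V / (quadrea B A0 A1 A2 * quadrea B A0 A2 A3))
    (hE03 : E03 = 4 * quadrance B A0 A3 * V / (quadrea B A0 A1 A3 * quadrea B A0 A2 A3))
    (hE12 : E12 = 4 * quadrance B A1 A2 * V / (quadrea B A0 A1 A2 * quadrea B A1 A2 A3))
    (hE13 : E13 = 4 * quadrance B A1 A3 * V / (quadrea B A0 A1 A3 * quadrea B A1 A2 A3))
    (hE23 : E23 = 4 * quadrance B A2 A3 * V / (quadrea B A0 A2 A3 * quadrea B A1 A2 A3)) :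
    (quadrea B A0 A1 A2 * quadrea B A0 A1 A3 * quadrea B A0 A2 A3 * quadrea B A1 A2 A3) ^ 2 *
        archi (E01 * E23) (E02 * E13) (E03 * E12) =
      256 * V ^ 4 *
        archi (quadrance B A0 A1 * quadrance B A2 A3)
              (quadrance B A0 A2 * quadrance B A1 A3)
              (quadrance B A0 A3 * quadrance B A1 A2) := by
  have archi_smul : ∀ t a b c : F, archi (t * a) (t * b) (t * c) = t ^ 2 * archi a b c := by
    intro t a b c; simp only [archi]; ring
  set a12 := quadrea B A0 A1 A2
  set a13 := quadrea B A0 A1 A3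
  set a23 := quadrea B A0 A2 A3
  set a123 := quadrea B A1 A2 A3
  set D := a12 * a13 * a23 * a123 with hD
  have hDne : D ≠ 0 := by
    simp [hD, mul_ne_zero, h012, h013, h023, h123]
  have k1 : E01 * E23 = (16 * V ^ 2 / D) * (quadrance B A0 A1 * quadrance B A2 A3) := by
    rw [hE01, hE23, hD]; field_simp; ring
  have k2 : E02 * E13 = (16 * V ^ 2 / D) * (quadrance B A0 A2 * quadrance B A1 A3) := by
    rw [hE02, hE13, hD]; field_simp; ring
  have k3 : E03 * E12 = (16 * V ^ 2 / D) * (quadrance B A0 A3 * quadrance B A1 A2) := by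
    rw [hE03, hE12, hD]; field_simp; ring
  rw [k1, k2, k3, archi_smul]
  rw [div_pow, div_mul_eq_mul_div, mul_div_assoc']
  rw [mul_comm (D ^ 2), mul_div_assoc, div_self (pow_ne_zero 2 hDne), mul_one]
  ring
end

section
/- Let A0, A1, A2, A3 be points of F³ whose difference vectors A1−A0, A2−A0, A3−A0 are linearly independent, and suppose the four B-quadreas 𝒜012, 𝒜013, 𝒜023, 𝒜123 are all nonzero. Let K = 16·𝒱²/(𝒜012·𝒜013·𝒜023·𝒜123) be the Richardson number of the tetrahedron, let C be a point with Q(C,A_0) = Q(C,A_1) = Q(C,A_2) = Q(C,A_3) (a B-circumcentre), and let R = Q(C,A_0) be the B-circumquadrance. Then 4·𝒱·K²·R = A(E01·E23, E02·E13, E03·E12). -/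
open Matrix

lemma bdot_comm {F : Type*} [Field F] {B : Matrix (Fin 3) (Fin 3) F} (hB : B.IsSymm)
    (u v : Fin 3 → F) : bdot B u v = bdot B v u := by
  unfold bdot
  rw [Matrix.dotProduct_mulVec, ← Matrix.mulVec_transpose, hB.eq, dotProduct_comm]

lemma bdot_sub_sub {F : Type*} [Field F] (B : Matrix (Fin 3) (Fin 3) F) (a b c d : Fin 3 → F) :
    bdot B (a - b) (c - d) = bdot B a c - bdot B a d - bdot B b c + bdot B b d := by
  simp [bdot, Matrix.mulVec_sub, sub_dotProduct, dotProduct_sub]; ring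

lemma bdot_comb_right {F : Type*} [Field F] (B : Matrix (Fin 3) (Fin 3) F)
    (v a b c : Fin 3 → F) (x y z : F) :
    bdot B v (x • a + y • b + z • c) = x * bdot B v a + y * bdot B v b + z * bdot B v c := by
  simp [bdot, Matrix.mulVec_add, Matrix.mulVec_smul, dotProduct_add, dotProduct_smul,
    smul_eq_mul]

lemma bdot_comb_left {F : Type*} [Field F] (B : Matrix (Fin 3) (Fin 3) F)
    (v a b c : Fin 3 → F) (x y z : F) :
    bdot B (x • a + y • b + z • c) v = x * bdot B a v + y * bdot B b v + z * bdot B c v := by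
  simp [bdot, add_dotProduct, smul_dotProduct, smul_eq_mul]

/-- With the Richardson number `K = 16·𝒱²/(𝒜012·𝒜013·𝒜023·𝒜123)` and B-circumquadrance `R`,
`4·𝒱·K²·R = A(E01·E23, E02·E13, E03·E12)`. -/
theorem circumquadrance_richardson {F : Type*} [Field F]
    (h2 : (2 : F) ≠ 0) (h3 : (3 : F) ≠ 0)
    (B : Matrix (Fin 3) (Fin 3) F) (hB : B.IsSymm) (hBdet : IsUnit B.det)
    (A0 A1 A2 A3 : Fin 3 → F)
    (hind : LinearIndependent F ![A1 - A0, A2 - A0, A3 - A0])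
    (h012 : quadrea B A0 A1 A2 ≠ 0) (h013 : quadrea B A0 A1 A3 ≠ 0)
    (h023 : quadrea B A0 A2 A3 ≠ 0) (h123 : quadrea B A1 A2 A3 ≠ 0)
    (V : F) (hV : V = quadrume B A0 A1 A2 A3)
    (K : F)
    (hK : K = 16 * V ^ 2 /
      (quadrea B A0 A1 A2 * quadrea B A0 A1 A3 * quadrea B A0 A2 A3 * quadrea B A1 A2 A3))
    (C : Fin 3 → F)
    (hC01 : quadrance B C A0 = quadrance B C A1)
    (hC02 : quadrance B C A0 = quadrance B C A2)
    (hC03 : quadrance B C A0 = quadrance B C A3)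
    (R : F) (hR : R = quadrance B C A0)
    (E01 E02 E03 E12 E13 E23 : F)
    (hE01 : E01 = 4 * quadrance B A0 A1 * V / (quadrea B A0 A1 A2 * quadrea B A0 A1 A3))
    (hE02 : E02 = 4 * quadrance B A0 A2 * V / (quadrea B A0 A1 A2 * quadrea B A0 A2 A3))
    (hE03 : E03 = 4 * quadrance B A0 A3 * V / (quadrea B A0 A1 A3 * quadrea B A0 A2 A3))
    (hE12 : E12 = 4 * quadrance B A1 A2 * V / (quadrea B A0 A1 A2 * quadrea B A1 A2 A3))
    (hE13 : E13 = 4 * quadrance B A1 A3 * V / (quadrea B A0 A1 A3 * quadrea B A1 A2 A3))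
    (hE23 : E23 = 4 * quadrance B A2 A3 * V / (quadrea B A0 A2 A3 * quadrea B A1 A2 A3)) :
    4 * V * K ^ 2 * R = archi (E01 * E23) (E02 * E13) (E03 * E12) := by
  set u1 : Fin 3 → F := A1 - A0 with hu1
  set u2 : Fin 3 → F := A2 - A0 with hu2
  set u3 : Fin 3 → F := A3 - A0 with hu3
  set w : Fin 3 → F := C - A0 with hw0
  set gp : F := bdot B u1 u1 with hgp
  set gq : F := bdot B u2 u2 with hgq
  set gr : F := bdot B u3 u3 with hgr
  set gs : F := bdot B u1 u2 with hgs
  set gt : F := bdot B u1 u3 with hgt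
  set gu : F := bdot B u2 u3 with hgu
  -- quadrance facts
  have hQ01 : quadrance B A0 A1 = gp := rfl
  have hQ02 : quadrance B A0 A2 = gq := rfl
  have hQ03 : quadrance B A0 A3 = gr := rfl
  have hQ12 : quadrance B A1 A2 = gp + gq - 2 * gs := by
    have h : A2 - A1 = u2 - u1 := by rw [hu1, hu2]; abel
    rw [quadrance, h, bdot_sub_sub, bdot_comm hB u2 u1, ← hgq, ← hgs, ← hgp]; ring
  have hQ13 : quadrance B A1 A3 = gp + gr - 2 * gt := by
    have h : A3 - A1 = u3 - u1 := by rw [hu1, hu3]; abel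
    rw [quadrance, h, bdot_sub_sub, bdot_comm hB u3 u1, ← hgr, ← hgt, ← hgp]; ring
  have hQ23 : quadrance B A2 A3 = gq + gr - 2 * gu := by
    have h : A3 - A2 = u3 - u2 := by rw [hu2, hu3]; abel
    rw [quadrance, h, bdot_sub_sub, bdot_comm hB u3 u2, ← hgr, ← hgu, ← hgq]; ring
  -- circumcentre
  have hQC0 : quadrance B C A0 = bdot B w w := by
    have h : A0 - C = (0:Fin 3 → F) - w := by rw [hw0]; abel
    rw [quadrance, h, bdot_sub_sub]
    simp [bdot]
  have expandC : ∀ (ui : Fin 3 → F) (Ai : Fin 3 → F), Ai - C = ui - w →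
      quadrance B C Ai = bdot B ui ui - 2 * bdot B ui w + bdot B w w := by
    intro ui Ai h
    rw [quadrance, h, bdot_sub_sub, bdot_comm hB w ui]; ring
  have hQC1 := expandC u1 A1 (by rw [hu1, hw0]; abel)
  have hQC2 := expandC u2 A2 (by rw [hu2, hw0]; abel)
  have hQC3 := expandC u3 A3 (by rw [hu3, hw0]; abel)
  have hbw1 : 2 * bdot B u1 w = gp := by
    rw [hQC0, hQC1] at hC01; linear_combination hC01
  have hbw2 : 2 * bdot B u2 w = gq := by
    rw [hQC0, hQC2] at hC02; linear_combination hC02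
  have hbw3 : 2 * bdot B u3 w = gr := by
    rw [hQC0, hQC3] at hC03; linear_combination hC03
  -- coordinates of w
  have hcard : Fintype.card (Fin 3) = Module.finrank F (Fin 3 → F) := by
    simp [Module.finrank_fin_fun]
  let bb := basisOfLinearIndependentOfCardEqFinrank hind hcard
  set x : F := bb.repr w 0 with hx
  set y : F := bb.repr w 1 with hy
  set z : F := bb.repr w 2 with hz
  have hw : w = x • u1 + y • u2 + z • u3 := by
    have h := bb.sum_repr w
    rw [Fin.sum_univ_three] at h
    have hb0 : bb 0 = u1 := by
      rw [show bb = basisOfLinearIndependentOfCardEqFinrank hind hcard from rfl]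
      rw [coe_basisOfLinearIndependentOfCardEqFinrank]; rfl
    have hb1 : bb 1 = u2 := by
      rw [show bb = basisOfLinearIndependentOfCardEqFinrank hind hcard from rfl]
      rw [coe_basisOfLinearIndependentOfCardEqFinrank]; rfl
    have hb2 : bb 2 = u3 := by
      rw [show bb = basisOfLinearIndependentOfCardEqFinrank hind hcard from rfl]
      rw [coe_basisOfLinearIndependentOfCardEqFinrank]; rfl
    rw [hb0, hb1, hb2] at h
    rw [← h, hx, hy, hz]
  -- linear relations
  have hexp1 : bdot B u1 w = x * gp + y * gs + z * gt := by
    rw [hw, bdot_comb_right]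
  have hexp2 : bdot B u2 w = x * gs + y * gq + z * gu := by
    rw [hw, bdot_comb_right, bdot_comm hB u2 u1]
  have hexp3 : bdot B u3 w = x * gt + y * gu + z * gr := by
    rw [hw, bdot_comb_right, bdot_comm hB u3 u1, bdot_comm hB u3 u2]
  have hlin1 : 2 * (x * gp + y * gs + z * gt) = gp := by
    linear_combination hbw1 - 2 * hexp1
  have hlin2 : 2 * (x * gs + y * gq + z * gu) = gq := by
    linear_combination hbw2 - 2 * hexp2
  have hlin3 : 2 * (x * gt + y * gu + z * gr) = gr := by
    linear_combination hbw3 - 2 * hexp3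
  have hww : bdot B w w = x * bdot B u1 w + y * bdot B u2 w + z * bdot B u3 w := by
    nth_rewrite 1 [hw]
    rw [bdot_comb_left]
  have hR2 : 2 * R = x * gp + y * gq + z * gr := by
    rw [hR, hQC0]
    linear_combination 2 * hww + x * hbw1 + y * hbw2 + z * hbw3
  -- quadrume as polynomial
  have hVp : V = 4 * (gp * gq * gr - gp * gu ^ 2 - gq * gt ^ 2 - gr * gs ^ 2
      + 2 * gs * gt * gu) := by
    rw [hV, quadrume, hQ01, hQ02, hQ03, hQ12, hQ13, hQ23, Matrix.det_fin_three]
    norm_num [Matrix.cons_val_zero, Matrix.cons_val_one, Matrix.head_cons,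
      Matrix.cons_val_two, Matrix.tail_cons]
    field_simp
    ring
  -- key identity 4VR = archi(Q01*Q23, Q02*Q13, Q03*Q12)
  have key : 4 * V * R = archi (gp * (gq + gr - 2 * gu)) (gq * (gp + gr - 2 * gt))
      (gr * (gp + gq - 2 * gs)) := by
    rw [archi]
    linear_combination (4 * R) * hVp
      + (8 * (gp * gq * gr - gp * gu ^ 2 - gq * gt ^ 2 - gr * gs ^ 2 + 2 * gs * gt * gu)) * hR2
      + (4 * (gp * (gq * gr - gu ^ 2) + gq * (gu * gt - gs * gr) + gr * (gs * gu - gq * gt))) * hlin1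
      + (4 * (gp * (gu * gt - gs * gr) + gq * (gp * gr - gt ^ 2) + gr * (gs * gt - gp * gu))) * hlin2
      + (4 * (gp * (gs * gu - gq * gt) + gq * (gs * gt - gp * gu) + gr * (gp * gq - gs ^ 2))) * hlin3
  -- products of opposite dihedral spreads
  have hP1 : E01 * E23 = K * (gp * (gq + gr - 2 * gu)) := by
    rw [hE01, hE23, hK, hQ01, hQ23]; field_simp; ring
  have hP2 : E02 * E13 = K * (gq * (gp + gr - 2 * gt)) := by
    rw [hE02, hE13, hK, hQ02, hQ13]; field_simp; ring
  have hP3 : E03 * E12 = K * (gr * (gp + gq - 2 * gs)) := by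
    rw [hE03, hE12, hK, hQ03, hQ12]; field_simp; ring
  rw [hP1, hP2, hP3]
  have harch : ∀ a b c : F, archi (K * a) (K * b) (K * c) = K ^ 2 * archi a b c := by
    intro a b c; rw [archi, archi]; ring
  rw [harch, ← key]
  ring
end

section
/- The B-quadreas of the Standard tetrahedron X0X1X2X3 satisfy 𝒜012 = 4α3, 𝒜013 = 4α2, 𝒜023 = 4α1, and 𝒜123 = 4D, where D = α1 + α2 + α3 + 2β1 + 2β2 + 2β3. -/
open Matrix

/-- The B-quadreas of the Standard tetrahedron satisfy
`𝒜012 = 4α3`, `𝒜013 = 4α2`, `𝒜023 = 4α1` and `𝒜123 = 4D`, where the `α`'s and `β`'s are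
the entries of the adjugate of `B` and `D = α1 + α2 + α3 + 2β1 + 2β2 + 2β3`. -/
theorem quadreas_standard_tetrahedron {F : Type*} [Field F]
    (h2 : (2 : F) ≠ 0) (h3 : (3 : F) ≠ 0)
    (B : Matrix (Fin 3) (Fin 3) F) (hB : B.IsSymm) (hBdet : IsUnit B.det) :
    quadrea B ![0, 0, 0] ![1, 0, 0] ![0, 1, 0] = 4 * B.adjugate 2 2 ∧
    quadrea B ![0, 0, 0] ![1, 0, 0] ![0, 0, 1] = 4 * B.adjugate 1 1 ∧
    quadrea B ![0, 0, 0] ![0, 1, 0] ![0, 0, 1] = 4 * B.adjugate 0 0 ∧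
    quadrea B ![1, 0, 0] ![0, 1, 0] ![0, 0, 1] =
      4 * (B.adjugate 0 0 + B.adjugate 1 1 + B.adjugate 2 2 +
        2 * B.adjugate 1 2 + 2 * B.adjugate 0 2 + 2 * B.adjugate 0 1) := by
  have h01 : B 1 0 = B 0 1 := by rw [← hB.apply]
  have h02 : B 2 0 = B 0 2 := by rw [← hB.apply]
  have h12 : B 2 1 = B 1 2 := by rw [← hB.apply]
  refine ⟨?_, ?_, ?_, ?_⟩ <;>
  · simp only [quadrea, quadrance, bdot, archi, adjugate_fin_three, dotProduct,
      mulVec, Fin.sum_univ_three, Pi.sub_apply, cons_val', cons_val_zero, cons_val_one,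
      head_cons, head_fin_const, cons_val_two, tail_cons, empty_val', cons_val_fin_one,
      of_apply, h01, h02, h12]
    ring
end

section
/- Suppose α1, α2, α3 and D = α1 + α2 + α3 + 2β1 + 2β2 + 2β3 are all nonzero. Then the B-dihedral spreads of the Standard tetrahedron X0X1X2X3 satisfy E01 = a1·Δ/(α2·α3), E02 = a2·Δ/(α1·α3), E03 = a3·Δ/(α1·α2), E23 = r1·Δ/(α1·D), E13 = r2·Δ/(α2·D), and E12 = r3·Δ/(α3·D). -/
open Matrix

/-- The B-dihedral spreads of the Standard tetrahedron `X0X1X2X3` satisfy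
`E01 = a1·Δ/(α2·α3)`, `E02 = a2·Δ/(α1·α3)`, `E03 = a3·Δ/(α1·α2)`,
`E23 = r1·Δ/(α1·D)`, `E13 = r2·Δ/(α2·D)` and `E12 = r3·Δ/(α3·D)`, where `Δ = det B`,
`a1, a2, a3` are the diagonal entries of `B`, the `α`'s and `β`'s are the entries of the
adjugate of `B`, `D = α1 + α2 + α3 + 2β1 + 2β2 + 2β3`, and
`r1 = a2 + a3 − 2b1`, `r2 = a1 + a3 − 2b2`, `r3 = a1 + a2 − 2b3`. -/
theorem dihedral_spreads_standard_tetrahedron {F : Type*} [Field F]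
    (h2 : (2 : F) ≠ 0) (h3 : (3 : F) ≠ 0)
    (B : Matrix (Fin 3) (Fin 3) F) (hB : B.IsSymm) (hBdet : IsUnit B.det)
    (X0 X1 X2 X3 : Fin 3 → F)
    (hX0 : X0 = ![0, 0, 0]) (hX1 : X1 = ![1, 0, 0])
    (hX2 : X2 = ![0, 1, 0]) (hX3 : X3 = ![0, 0, 1])
    (D : F)
    (hD : D = B.adjugate 0 0 + B.adjugate 1 1 + B.adjugate 2 2 +
      2 * B.adjugate 1 2 + 2 * B.adjugate 0 2 + 2 * B.adjugate 0 1)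
    (hα1 : B.adjugate 0 0 ≠ 0) (hα2 : B.adjugate 1 1 ≠ 0) (hα3 : B.adjugate 2 2 ≠ 0)
    (hDne : D ≠ 0)
    (V : F) (hV : V = quadrume B X0 X1 X2 X3)
    (E01 E02 E03 E12 E13 E23 : F)
    (hE01 : E01 = 4 * quadrance B X0 X1 * V / (quadrea B X0 X1 X2 * quadrea B X0 X1 X3))
    (hE02 : E02 = 4 * quadrance B X0 X2 * V / (quadrea B X0 X1 X2 * quadrea B X0 X2 X3))
    (hE03 : E03 = 4 * quadrance B X0 X3 * V / (quadrea B X0 X1 X3 * quadrea B X0 X2 X3))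
    (hE12 : E12 = 4 * quadrance B X1 X2 * V / (quadrea B X0 X1 X2 * quadrea B X1 X2 X3))
    (hE13 : E13 = 4 * quadrance B X1 X3 * V / (quadrea B X0 X1 X3 * quadrea B X1 X2 X3))
    (hE23 : E23 = 4 * quadrance B X2 X3 * V / (quadrea B X0 X2 X3 * quadrea B X1 X2 X3)) :
    E01 = B 0 0 * B.det / (B.adjugate 1 1 * B.adjugate 2 2) ∧
    E02 = B 1 1 * B.det / (B.adjugate 0 0 * B.adjugate 2 2) ∧
    E03 = B 2 2 * B.det / (B.adjugate 0 0 * B.adjugate 1 1) ∧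
    E23 = (B 1 1 + B 2 2 - 2 * B 1 2) * B.det / (B.adjugate 0 0 * D) ∧
    E13 = (B 0 0 + B 2 2 - 2 * B 0 2) * B.det / (B.adjugate 1 1 * D) ∧
    E12 = (B 0 0 + B 1 1 - 2 * B 0 1) * B.det / (B.adjugate 2 2 * D) := by
  subst hX0 hX1 hX2 hX3 hV hE01 hE02 hE03 hE12 hE13 hE23 hD
  have hs10 : B 1 0 = B 0 1 := (hB.apply 1 0).symm
  have hs20 : B 2 0 = B 0 2 := (hB.apply 2 0).symm
  have hs21 : B 2 1 = B 1 2 := (hB.apply 2 1).symm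
  have hdet : B.det = B 0 0 * B 1 1 * B 2 2 - B 0 0 * B 1 2 * B 2 1 -
      B 0 1 * B 1 0 * B 2 2 + B 0 1 * B 1 2 * B 2 0 + B 0 2 * B 1 0 * B 2 1 -
      B 0 2 * B 1 1 * B 2 0 := Matrix.det_fin_three B
  have h4 : (4 : F) ≠ 0 := by
    intro h; exact mul_ne_zero h2 h2 (by linear_combination h)
  -- quadrance values
  have q01 : quadrance B ![0,0,0] ![1,0,0] = B 0 0 := by
    simp [quadrance, bdot, Matrix.mulVec, dotProduct, Fin.sum_univ_three]
  have q02 : quadrance B ![0,0,0] ![0,1,0] = B 1 1 := by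
    simp [quadrance, bdot, Matrix.mulVec, dotProduct, Fin.sum_univ_three]
  have q03 : quadrance B ![0,0,0] ![0,0,1] = B 2 2 := by
    simp [quadrance, bdot, Matrix.mulVec, dotProduct, Fin.sum_univ_three]
  have q12 : quadrance B ![1,0,0] ![0,1,0] = B 0 0 + B 1 1 - 2 * B 0 1 := by
    simp [quadrance, bdot, Matrix.mulVec, dotProduct, Fin.sum_univ_three, hs10]
    ring
  have q13 : quadrance B ![1,0,0] ![0,0,1] = B 0 0 + B 2 2 - 2 * B 0 2 := by
    simp [quadrance, bdot, Matrix.mulVec, dotProduct, Fin.sum_univ_three, hs20]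
    ring
  have q23 : quadrance B ![0,1,0] ![0,0,1] = B 1 1 + B 2 2 - 2 * B 1 2 := by
    simp [quadrance, bdot, Matrix.mulVec, dotProduct, Fin.sum_univ_three, hs21]
    ring
  have ha00 : B.adjugate 0 0 = B 1 1 * B 2 2 - B 1 2 * B 2 1 := by
    rw [Matrix.adjugate_fin_three]; rfl
  have ha11 : B.adjugate 1 1 = B 0 0 * B 2 2 - B 0 2 * B 2 0 := by
    rw [Matrix.adjugate_fin_three]; rfl
  have ha22 : B.adjugate 2 2 = B 0 0 * B 1 1 - B 0 1 * B 1 0 := by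
    rw [Matrix.adjugate_fin_three]; rfl
  have ha01 : B.adjugate 0 1 = -(B 0 1 * B 2 2) + B 0 2 * B 2 1 := by
    rw [Matrix.adjugate_fin_three]; rfl
  have ha02 : B.adjugate 0 2 = B 0 1 * B 1 2 - B 0 2 * B 1 1 := by
    rw [Matrix.adjugate_fin_three]; rfl
  have ha12 : B.adjugate 1 2 = -(B 0 0 * B 1 2) + B 0 2 * B 1 0 := by
    rw [Matrix.adjugate_fin_three]; rfl
  -- quadrea values
  have A012 : quadrea B ![0,0,0] ![1,0,0] ![0,1,0] = 4 * B.adjugate 2 2 := by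
    rw [quadrea, q01, q02, q12, archi, ha22, hs10]; ring
  have A013 : quadrea B ![0,0,0] ![1,0,0] ![0,0,1] = 4 * B.adjugate 1 1 := by
    rw [quadrea, q01, q03, q13, archi, ha11, hs20]; ring
  have A023 : quadrea B ![0,0,0] ![0,1,0] ![0,0,1] = 4 * B.adjugate 0 0 := by
    rw [quadrea, q02, q03, q23, archi, ha00, hs21]; ring
  have A123 : quadrea B ![1,0,0] ![0,1,0] ![0,0,1] =
      4 * (B.adjugate 0 0 + B.adjugate 1 1 + B.adjugate 2 2 +
        2 * B.adjugate 1 2 + 2 * B.adjugate 0 2 + 2 * B.adjugate 0 1) := by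
    rw [quadrea, q12, q13, q23, archi, ha00, ha11, ha22, ha01, ha02, ha12, hs10, hs20, hs21]
    ring
  have hVval : quadrume B ![0,0,0] ![1,0,0] ![0,1,0] ![0,0,1] = 4 * B.det := by
    rw [quadrume, q01, q02, q03, q12, q13, q23, Matrix.det_fin_three, hdet, hs10, hs20, hs21]
    simp [Matrix.of_apply]
    field_simp
    ring
  refine ⟨?_, ?_, ?_, ?_, ?_, ?_⟩
  · rw [q01, hVval, A012, A013]
    field_simp
  · rw [q02, hVval, A012, A023]
    field_simp
  · rw [q03, hVval, A013, A023]
    field_simp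
  · rw [q23, hVval, A023, A123]
    field_simp
  · rw [q13, hVval, A013, A123]
    field_simp
  · rw [q12, hVval, A012, A123]
    field_simp
end
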